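/- arXiv:1002.4159 — 3 statements merged into one kernel-verified Lean document; each statement's English description precedes it below -/
import Mathlib

section
/- The map x ↦ (‖x‖_∞/‖x‖₂)·x (extended by 0 at 0) is bi-Lipschitz on ℝ^d: there exist constants 0 < c ≤ C with c‖x-y‖₂ ≤ ‖h(x)-h(y)‖₂ ≤ C‖x-y‖₂ for all x,y ∈ ℝ^d. -/
/-!
Write `h x = ρ x • x` with `ρ = N / M`, `N` the sup norm and `M` the Euclidean norm. Both norms
are `1`-Lipschitz and `‖x‖ ≤ √d · N x`, so `ρ` is bounded and `|ρ x - ρ y| · ‖x‖ = O(‖x - y‖)`;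
splitting `ρ x • x - ρ y • y = (ρ x - ρ y) • x + ρ y • (x - y)` shows that `h` is Lipschitz.
With the roles of the two norms exchanged the same estimate applies to `y ↦ (M y / N y) • y`,
which by homogeneity inverts `h`; its Lipschitz bound is the lower bound for `h`.
-/

/-- The sup norm of a point of Euclidean space. -/
noncomputable def supNorm {d : ℕ} (x : EuclideanSpace ℝ (Fin d)) : ℝ :=
  ‖(WithLp.equiv 2 (Fin d → ℝ)) x‖

open scoped NNReal

noncomputable def radialRescale {E : Type*} [SMul ℝ E] (N M : E → ℝ) (x : E) : E :=
  (N x / M x) • x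

section RadialRescale

variable {E : Type*} [SeminormedAddCommGroup E] {N M : E → ℝ} {K L : ℝ≥0} {B : ℝ}

lemma LipschitzWith.abs_le_mul_norm (hN : LipschitzWith K N) (hN0 : N 0 = 0) (x : E) :
    |N x| ≤ K * ‖x‖ := by
  simpa [hN0, Real.dist_eq] using hN.dist_le_mul x 0

lemma abs_div_le_of_norm_le_mul (hN : LipschitzWith K N) (hN0 : N 0 = 0) (hB : 0 ≤ B)
    (hM : ∀ x, ‖x‖ ≤ B * M x) (x : E) : |N x / M x| ≤ K * B := by
  rcases (norm_nonneg x).eq_or_lt with hx | hx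
  · have : N x = 0 := abs_nonpos_iff.1 (by simpa [← hx] using hN.abs_le_mul_norm hN0 x)
    simp [this, mul_nonneg K.coe_nonneg hB]
  · have hMx : 0 < M x := pos_of_mul_pos_right (hx.trans_le (hM x)) hB
    rw [abs_div, abs_of_pos hMx, div_le_iff₀ hMx, mul_assoc]
    exact (hN.abs_le_mul_norm hN0 x).trans (by gcongr; exact hM x)

lemma div_mul_cancel_of_norm_le_mul (hN : LipschitzWith K N) (hN0 : N 0 = 0)
    (hM : ∀ x, ‖x‖ ≤ B * M x) (x : E) : N x / M x * M x = N x := by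
  refine div_mul_cancel_of_imp fun hMx => abs_nonpos_iff.1 ?_
  have hx : ‖x‖ = 0 := le_antisymm (by simpa [hMx] using hM x) (norm_nonneg x)
  simpa [hx] using hN.abs_le_mul_norm hN0 x

lemma abs_div_sub_div_mul_norm_le (hN : LipschitzWith K N) (hN0 : N 0 = 0)
    (hM : LipschitzWith L M) (hB : 0 ≤ B) (hMB : ∀ x, ‖x‖ ≤ B * M x) (x y : E) :
    |N x / M x - N y / M y| * ‖x‖ ≤ K * B * (1 + L * B) * ‖x - y‖ := by
  rcases (norm_nonneg x).eq_or_lt with hx | hx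
  · rw [← hx, mul_zero]
    have : (0 : ℝ) ≤ K * B * (1 + L * B) := by positivity
    positivity
  have hMx : 0 < M x := pos_of_mul_pos_right (hx.trans_le (hMB x)) hB
  have hNxy : |N x - N y| ≤ K * ‖x - y‖ := by
    simpa [Real.dist_eq, dist_eq_norm] using hN.dist_le_mul x y
  have hMyx : |M y - M x| ≤ L * ‖x - y‖ := by
    simpa [Real.dist_eq, dist_eq_norm, abs_sub_comm] using hM.dist_le_mul x y
  have hρy := abs_div_le_of_norm_le_mul hN hN0 hB hMB y
  have key : (N x / M x - N y / M y) * M x = N x - N y + N y / M y * (M y - M x) := by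
    rw [sub_mul, div_mul_cancel₀ _ hMx.ne', mul_sub, div_mul_cancel_of_norm_le_mul hN hN0 hMB y]
    ring
  calc |N x / M x - N y / M y| * ‖x‖
      ≤ |N x / M x - N y / M y| * (B * M x) := by gcongr; exact hMB x
    _ = B * |N x - N y + N y / M y * (M y - M x)| := by
        rw [← key, abs_mul, abs_of_pos hMx]; ring
    _ ≤ B * (K * ‖x - y‖ + K * B * (L * ‖x - y‖)) := by
        gcongr
        refine (abs_add_le _ _).trans (add_le_add hNxy ?_)
        rw [abs_mul]
        gcongr
    _ = K * B * (1 + L * B) * ‖x - y‖ := by ring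

variable [NormedSpace ℝ E]

lemma norm_smul_sub_smul_le {ρ : E → ℝ} {A C : ℝ} (hA : ∀ x, |ρ x| ≤ A)
    (hC : ∀ x y, |ρ x - ρ y| * ‖x‖ ≤ C * ‖x - y‖) (x y : E) :
    ‖ρ x • x - ρ y • y‖ ≤ (A + C) * ‖x - y‖ := by
  have hsplit : ρ x • x - ρ y • y = (ρ x - ρ y) • x + ρ y • (x - y) := by module
  calc ‖ρ x • x - ρ y • y‖ ≤ |ρ x - ρ y| * ‖x‖ + |ρ y| * ‖x - y‖ := by
        rw [hsplit, ← Real.norm_eq_abs, ← Real.norm_eq_abs, ← norm_smul, ← norm_smul]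
        exact norm_add_le _ _
    _ ≤ C * ‖x - y‖ + A * ‖x - y‖ :=
        add_le_add (hC x y) (mul_le_mul_of_nonneg_right (hA y) (norm_nonneg _))
    _ = (A + C) * ‖x - y‖ := by ring

lemma norm_radialRescale_sub_le (hN : LipschitzWith K N) (hN0 : N 0 = 0)
    (hM : LipschitzWith L M) (hB : 0 ≤ B) (hMB : ∀ x, ‖x‖ ≤ B * M x) (x y : E) :
    ‖radialRescale N M x - radialRescale N M y‖ ≤ K * B * (2 + L * B) * ‖x - y‖ := by
  calc ‖radialRescale N M x - radialRescale N M y‖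
      ≤ (K * B + K * B * (1 + L * B)) * ‖x - y‖ :=
        norm_smul_sub_smul_le (abs_div_le_of_norm_le_mul hN hN0 hB hMB)
          (abs_div_sub_div_mul_norm_le hN hN0 hM hB hMB) x y
    _ = K * B * (2 + L * B) * ‖x - y‖ := by ring

end RadialRescale

lemma radialRescale_radialRescale {E : Type*} [AddCommGroup E] [Module ℝ E] {N M : E → ℝ}
    (hN : ∀ (t : ℝ) x, N (t • x) = |t| * N x) (hM : ∀ (t : ℝ) x, M (t • x) = |t| * M x)
    (hN_eq_zero : ∀ x, N x = 0 → x = 0) (hM_eq_zero : ∀ x, M x = 0 → x = 0) (x : E) :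
    radialRescale M N (radialRescale N M x) = x := by
  rcases eq_or_ne x 0 with rfl | hx
  · simp [radialRescale]
  have hNx : N x ≠ 0 := mt (hN_eq_zero x) hx
  have hMx : M x ≠ 0 := mt (hM_eq_zero x) hx
  have hr : |N x / M x| ≠ 0 := abs_ne_zero.2 (div_ne_zero hNx hMx)
  simp only [radialRescale, hN, hM, smul_smul]
  rw [mul_div_mul_left _ _ hr, div_mul_div_cancel₀' hMx, div_self hNx, one_smul]

section SupNorm

variable {d : ℕ}

lemma lipschitzWith_supNorm : LipschitzWith 1 (supNorm (d := d)) := by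
  have h := lipschitzWith_one_norm.comp (PiLp.lipschitzWith_ofLp 2 fun _ : Fin d => ℝ)
  rwa [mul_one] at h

lemma supNorm_nonneg (x : EuclideanSpace ℝ (Fin d)) : 0 ≤ supNorm x := norm_nonneg _

lemma supNorm_zero : supNorm (0 : EuclideanSpace ℝ (Fin d)) = 0 := by
  simp [supNorm]

lemma supNorm_smul (t : ℝ) (x : EuclideanSpace ℝ (Fin d)) :
    supNorm (t • x) = |t| * supNorm x := by
  simp [supNorm, norm_smul]

lemma supNorm_eq_zero {x : EuclideanSpace ℝ (Fin d)} : supNorm x = 0 ↔ x = 0 := by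
  simp [supNorm]

lemma norm_le_sqrt_mul_supNorm (x : EuclideanSpace ℝ (Fin d)) : ‖x‖ ≤ √d * supNorm x := by
  have hcoord : ∀ i, ‖x i‖ ^ 2 ≤ supNorm x ^ 2 := fun i =>
    pow_le_pow_left₀ (norm_nonneg _) (norm_le_pi_norm (WithLp.equiv 2 _ x) i) 2
  calc ‖x‖ = √(∑ i, ‖x i‖ ^ 2) := EuclideanSpace.norm_eq x
    _ ≤ √(d * supNorm x ^ 2) := by
        gcongr
        simpa using Finset.sum_le_card_nsmul Finset.univ _ _ fun i _ => hcoord i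
    _ = √d * supNorm x := by
        rw [Real.sqrt_mul (Nat.cast_nonneg d), Real.sqrt_sq (supNorm_nonneg x)]

end SupNorm

theorem supNorm_rescaling_biLipschitz {d : ℕ} (hd : 1 ≤ d)
    (h : EuclideanSpace ℝ (Fin d) → EuclideanSpace ℝ (Fin d))
    (hh : ∀ x, x ≠ 0 → h x = (supNorm x / ‖x‖) • x) (h0 : h 0 = 0) :
    ∃ c C : ℝ, 0 < c ∧ c ≤ C ∧
      ∀ x y : EuclideanSpace ℝ (Fin d),
        c * ‖x - y‖ ≤ ‖h x - h y‖ ∧ ‖h x - h y‖ ≤ C * ‖x - y‖ := by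
  have h_eq : h = radialRescale supNorm norm := funext fun x => by
    rcases eq_or_ne x 0 with rfl | hx
    · simp [h0, radialRescale]
    · exact hh x hx
  subst h_eq
  have h_lip (x y : EuclideanSpace ℝ (Fin d)) :=
    norm_radialRescale_sub_le lipschitzWith_supNorm supNorm_zero lipschitzWith_one_norm
      zero_le_one (fun z => (one_mul ‖z‖).ge) x y
  have inv_lip (x y : EuclideanSpace ℝ (Fin d)) :=
    norm_radialRescale_sub_le lipschitzWith_one_norm norm_zero lipschitzWith_supNorm
      (Real.sqrt_nonneg d) norm_le_sqrt_mul_supNorm x y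
  have h_inv (x : EuclideanSpace ℝ (Fin d)) :=
    radialRescale_radialRescale supNorm_smul (fun t z => by rw [norm_smul, Real.norm_eq_abs])
      (fun z => supNorm_eq_zero.1) (fun z => norm_eq_zero.1) x
  set L := √d * (2 + √d)
  have hL : 1 ≤ L := by
    have : 1 ≤ √d := Real.one_le_sqrt.2 (by exact_mod_cast hd)
    nlinarith
  refine ⟨L⁻¹, 3, by positivity, (inv_le_one_of_one_le₀ hL).trans (by norm_num),
    fun x y => ⟨?_, ?_⟩⟩
  · rw [inv_mul_le_iff₀ (by positivity)]
    simpa [h_inv, L] using inv_lip (radialRescale supNorm norm x) (radialRescale supNorm norm y)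
  · simpa [two_add_one_eq_three] using h_lip x y
end

section
/- Let X be a nonempty compact connected metric space equipped with a strict linear order ≺ whose order topology agrees with the metric topology. Then either X consists of a single point, or there is an order-preserving homeomorphism from X onto the unit interval [0,1]. -/
/-!
Compactness makes every subset of `X` have a supremum, connectedness makes the order dense, and
separability provides a countable order-dense subset without endpoints, which by Cantor's
back-and-forth theorem is order-isomorphic to `ℚ ∩ (0, 1)`. Two complete linear orders with
order-isomorphic order-dense subsets are order-isomorphic (extend by suprema), so `X` is
order-isomorphic to `[0, 1]`; an order isomorphism between order topologies is a homeomorphism.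
-/

open Set

section IsOrderDense

variable {α β : Type*} [LinearOrder α] [LinearOrder β]

def Set.IsOrderDense (S : Set α) : Prop :=
  ∀ ⦃a b : α⦄, a < b → ∃ s ∈ S, s ∈ Ioo a b

variable {S : Set α} {T : Set β}

theorem Set.IsOrderDense.isLUB_Iio (hS : S.IsOrderDense) (x : α) :
    IsLUB ((↑) '' {s : S | (s : α) < x}) x := by
  refine ⟨by rintro _ ⟨s, hs, rfl⟩; exact hs.le, fun b hb => not_lt.1 fun hbx => ?_⟩
  obtain ⟨s, hsS, hbs, hsx⟩ := hS hbx
  exact (hb ⟨⟨s, hsS⟩, hsx, rfl⟩).not_gt hbs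

theorem Set.IsOrderDense.lt_iff_of_isLUB (hS : S.IsOrderDense) {f : S → β} (hf : StrictMono f)
    {x : α} {y : β} (hy : IsLUB (f '' {s | (s : α) < x}) y) (s : S) : f s < y ↔ (s : α) < x := by
  refine ⟨fun h => ?_, fun h => ?_⟩
  · obtain ⟨_, ⟨s', hs'x, rfl⟩, hss'⟩ := (lt_isLUB_iff hy).1 h
    exact (show (s : α) < s' from hf.lt_iff_lt.1 hss').trans hs'x
  · obtain ⟨s', hs'S, hss', hs'x⟩ := hS h
    exact (hf (show s < ⟨s', hs'S⟩ from hss')).trans_le (hy.1 ⟨⟨s', hs'S⟩, hs'x, rfl⟩)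

theorem Set.IsOrderDense.isLUB_symm_image (hS : S.IsOrderDense) (e : S ≃o T) {x : α} {y : β}
    (hy : IsLUB ((fun s => (e s : β)) '' {s | (s : α) < x}) y) :
    IsLUB ((fun t => (e.symm t : α)) '' {t | (t : β) < y}) x := by
  have hlt := hS.lt_iff_of_isLUB (f := fun s => (e s : β)) (fun _ _ h => e.strictMono h) hy
  convert hS.isLUB_Iio x using 1
  ext a
  constructor
  · rintro ⟨t, ht, rfl⟩
    exact ⟨e.symm t, (hlt _).1 (by simpa using ht), rfl⟩
  · rintro ⟨s, hs, rfl⟩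
    exact ⟨e s, (hlt s).2 hs, by simp⟩

theorem monotone_of_isLUB_image_Iio (f : S → β) {F : α → β}
    (hF : ∀ x, IsLUB (f '' {s | (s : α) < x}) (F x)) : Monotone F :=
  fun _ _ h => (hF _).mono (hF _) (image_mono fun _ hs => lt_of_lt_of_le hs h)

/-- The extension sends `x` to the supremum of `e s` over the points `s ∈ S` below `x`. -/
theorem OrderIso.nonempty_orderIso_of_isOrderDense (e : S ≃o T) (hS : S.IsOrderDense)
    (hT : T.IsOrderDense) (hα : ∀ s : Set α, ∃ x, IsLUB s x) (hβ : ∀ t : Set β, ∃ y, IsLUB t y) :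
    Nonempty (α ≃o β) := by
  choose F hF using fun x : α => hβ ((fun s => (e s : β)) '' {s | (s : α) < x})
  choose G hG using fun y : β => hα ((fun t => (e.symm t : α)) '' {t | (t : β) < y})
  refine ⟨Equiv.toOrderIso ⟨F, G, fun x => ?_, fun y => ?_⟩
    (monotone_of_isLUB_image_Iio _ hF) (monotone_of_isLUB_image_Iio _ hG)⟩
  · exact (hG (F x)).unique (hS.isLUB_symm_image e (hF x))
  · exact (hF (G y)).unique (hT.isLUB_symm_image e.symm (hG y))

end IsOrderDense

theorem CompactSpace.exists_isLUB {α : Type*} [LinearOrder α] [TopologicalSpace α]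
    [OrderClosedTopology α] [CompactSpace α] [Nonempty α] (s : Set α) : ∃ x, IsLUB s x := by
  rcases s.eq_empty_or_nonempty with rfl | hs
  · obtain ⟨x, -, hx⟩ := isCompact_univ.exists_isLeast (univ_nonempty (α := α))
    exact ⟨x, isLUB_empty_iff.2 fun y => hx (mem_univ y)⟩
  · obtain ⟨x, -, hx⟩ := isClosed_closure.isCompact.exists_isLUB hs.closure
    exact ⟨x, (isLUB_congr (upperBounds_closure s)).1 hx⟩

section Subtype

variable {α : Type*} [LinearOrder α] {S : Set α}

theorem Set.IsOrderDense.denselyOrdered (hS : S.IsOrderDense) : DenselyOrdered S :=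
  ⟨fun a b hab => by
    obtain ⟨s, hs, hs'⟩ := hS hab
    exact ⟨⟨s, hs⟩, hs'⟩⟩

theorem Set.IsOrderDense.noMinOrder (hS : S.IsOrderDense) (hbot : ∀ x, IsBot x → x ∉ S) :
    NoMinOrder S :=
  ⟨fun a => by
    obtain ⟨b, hb⟩ : ∃ b, b < (a : α) := by simpa [IsBot] using mt (hbot a) (not_not.2 a.2)
    obtain ⟨s, hs, -, hsa⟩ := hS hb
    exact ⟨⟨s, hs⟩, hsa⟩⟩

theorem Set.IsOrderDense.noMaxOrder (hS : S.IsOrderDense) (htop : ∀ x, IsTop x → x ∉ S) :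
    NoMaxOrder S :=
  ⟨fun a => by
    obtain ⟨b, hb⟩ : ∃ b, (a : α) < b := by simpa [IsTop] using mt (htop a) (not_not.2 a.2)
    obtain ⟨s, hs, has, -⟩ := hS hb
    exact ⟨⟨s, hs⟩, has⟩⟩

theorem Set.IsOrderDense.nonempty [Nontrivial α] (hS : S.IsOrderDense) : S.Nonempty := by
  obtain ⟨a, b, hab⟩ := exists_pair_lt α
  obtain ⟨s, hs, -⟩ := hS hab
  exact ⟨s, hs⟩

end Subtype

theorem Dense.isOrderDense {α : Type*} [LinearOrder α] [TopologicalSpace α] [OrderTopology α]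
    [DenselyOrdered α] {S : Set α} (hS : Dense S) : S.IsOrderDense :=
  fun _ _ => hS.exists_between

section Countable

variable {α : Type*} [LinearOrder α] [TopologicalSpace α] [OrderTopology α]
  [DenselyOrdered α] [TopologicalSpace.SeparableSpace α] [Nontrivial α]

theorem exists_isOrderDense_orderIso_Ioo_rat :
    ∃ S : Set α, S.IsOrderDense ∧ Nonempty (S ≃o Ioo (0 : ℚ) 1) := by
  obtain ⟨S, hSc, hSd, hbot, htop⟩ := exists_countable_dense_no_bot_top α
  have hS := hSd.isOrderDense
  have := hSc.to_subtype
  have := hS.denselyOrdered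
  have := hS.noMinOrder hbot
  have := hS.noMaxOrder htop
  have := hS.nonempty.to_subtype
  have : Nonempty (Ioo (0 : ℚ) 1) := ⟨⟨1 / 2, by norm_num, by norm_num⟩⟩
  exact ⟨S, hS, Order.iso_of_countable_dense S _⟩

end Countable

theorem nonempty_orderIso_of_compactSpace_of_connectedSpace {α β : Type*}
    [LinearOrder α] [TopologicalSpace α] [OrderTopology α] [CompactSpace α] [ConnectedSpace α]
    [TopologicalSpace.SeparableSpace α] [Nontrivial α]
    [LinearOrder β] [TopologicalSpace β] [OrderTopology β] [CompactSpace β] [ConnectedSpace β]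
    [TopologicalSpace.SeparableSpace β] [Nontrivial β] : Nonempty (α ≃o β) := by
  have := denselyOrdered_of_preconnectedSpace (α := α)
  have := denselyOrdered_of_preconnectedSpace (α := β)
  obtain ⟨S, hS, ⟨eS⟩⟩ := exists_isOrderDense_orderIso_Ioo_rat (α := α)
  obtain ⟨T, hT, ⟨eT⟩⟩ := exists_isOrderDense_orderIso_Ioo_rat (α := β)
  exact (eS.trans eT.symm).nonempty_orderIso_of_isOrderDense hS hT
    CompactSpace.exists_isLUB CompactSpace.exists_isLUB

theorem orderTopology_linearOrderOfSTO {X : Type*} [t : TopologicalSpace X]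
    (r : X → X → Prop) [IsStrictTotalOrder X r] [DecidableRel r]
    (htop : TopologicalSpace.generateFrom {s : Set X | ∃ a : X, s = {w | r w a} ∨ s = {w | r a w}}
      = t) :
    @OrderTopology X t (linearOrderOfSTO r).toPreorder := by
  let := linearOrderOfSTO r
  refine ⟨htop.symm.trans (congrArg _ (ext fun s => ?_))⟩
  exact exists_congr fun _ => or_comm

theorem compact_connected_linear_order_arc_general
    (X : Type*) [MetricSpace X] [CompactSpace X] [ConnectedSpace X]
    (r : X → X → Prop) [IsStrictTotalOrder X r]
    (htop : TopologicalSpace.generateFrom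
        {s : Set X | ∃ a : X, s = {w | r w a} ∨ s = {w | r a w}}
      = (inferInstance : TopologicalSpace X)) :
    (∃ x : X, ∀ y : X, y = x) ∨
      ∃ e : X ≃ₜ Set.Icc (0 : ℝ) 1, ∀ a b : X, r a b ↔ (e a : ℝ) < (e b : ℝ) := by
  classical
  let := linearOrderOfSTO r
  have := orderTopology_linearOrderOfSTO r htop
  rcases subsingleton_or_nontrivial X with _ | _
  · exact Or.inl ⟨Classical.arbitrary X, fun y => Subsingleton.elim _ _⟩
  · obtain ⟨e⟩ := nonempty_orderIso_of_compactSpace_of_connectedSpace (α := X) (β := Icc (0 : ℝ) 1)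
    exact Or.inr ⟨e.toHomeomorph, fun a b => e.lt_iff_lt.symm⟩

theorem compact_connected_linear_order_arc
    (X : Type*) [MetricSpace X] [CompactSpace X] [ConnectedSpace X] [Nonempty X]
    (r : X → X → Prop) [IsStrictTotalOrder X r]
    (htop : TopologicalSpace.generateFrom
        {s : Set X | ∃ a : X, s = {w | r w a} ∨ s = {w | r a w}}
      = (inferInstance : TopologicalSpace X)) :
    (∃ x : X, ∀ y : X, y = x) ∨
      ∃ e : X ≃ₜ Set.Icc (0 : ℝ) 1, ∀ a b : X, r a b ↔ (e a : ℝ) < (e b : ℝ) :=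
  compact_connected_linear_order_arc_general X r htop
end

section
/- Let Y ⊆ ℝ^d and ρ > 1. Suppose that for every y ∈ Y and every η > 0 there exist r(y) ∈ (0,1), d(y) ∈ (0,η) and N(y) ∈ ℕ with d(y)^ρ · N(y) ≤ r(y)^d, such that B(y, r(y)) ∩ Y can be covered by N(y) sets each of diameter at most d(y). Then the Hausdorff dimension of Y is at most ρ. -/
/-!
Fix a bounded piece `S` of `Y` and a scale `η`. The Vitali `5r`-covering lemma applied to the
balls `B(y, r(y)/5)`, `y ∈ S`, selects countably many disjoint balls whose `5`-fold enlargements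
cover `S`; they lie in the `1`-neighbourhood of `S`, so `∑ r(y)^d ≤ C(S)` with `C(S)` independent
of `η`. Covering each selected `B(y, r(y)) ∩ Y` by its `N(y)` sets of diameter `≤ δ(y) < η` gives a
cover of `S` with `∑ diam^ρ ≤ ∑ N(y) δ(y)^ρ ≤ ∑ r(y)^d ≤ C(S)`, hence `μH[ρ] S < ∞` and
`dimH S ≤ ρ`. Countable stability of `dimH` passes from the bounded pieces to `Y`.
-/

open Metric MeasureTheory Filter Set Module Topology
open scoped ENNReal

universe u

theorem hausdorffMeasure_le_of_forall_cover {X : Type u} [EMetricSpace X] [MeasurableSpace X]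
    [BorelSpace X] {s : Set X} {d : ℝ} {C : ℝ≥0∞}
    (h : ∀ η : ℝ, 0 < η → ∃ (ι : Type u) (_ : Countable ι) (t : ι → Set X),
      s ⊆ ⋃ i, t i ∧ (∀ i, ediam (t i) ≤ ENNReal.ofReal η) ∧ ∑' i, ediam (t i) ^ d ≤ C) :
    μH[d] s ≤ C := by
  choose ι _ t hcover hdiam hsum using fun n : ℕ => h (1 / (n + 1)) Nat.one_div_pos_of_nat
  have hη : Tendsto (fun n : ℕ => ENNReal.ofReal (1 / (n + 1))) atTop (𝓝 0) := by
    simpa using ENNReal.tendsto_ofReal tendsto_one_div_add_atTop_nhds_zero_nat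
  calc μH[d] s ≤ liminf (fun n => ∑' i, ediam (t n i) ^ d) atTop :=
        Measure.hausdorffMeasure_le_liminf_tsum d s _ hη t (.of_forall hdiam) (.of_forall hcover)
    _ ≤ C := liminf_le_of_frequently_le' (.of_forall hsum)

theorem sum_ediam_rpow_le {X ι : Type*} [PseudoEMetricSpace X] [Fintype ι]
    {U : ι → Set X} {δ ρ : ℝ} (hδ : 0 ≤ δ) (hρ : 0 ≤ ρ) (hU : ∀ i, ediam (U i) ≤ ENNReal.ofReal δ) :
    ∑ i, ediam (U i) ^ ρ ≤ ENNReal.ofReal (δ ^ ρ * Fintype.card ι) := by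
  calc ∑ i, ediam (U i) ^ ρ ≤ ∑ _i : ι, ENNReal.ofReal δ ^ ρ :=
        Finset.sum_le_sum fun i _ => ENNReal.rpow_le_rpow (hU i) hρ
    _ = ENNReal.ofReal (δ ^ ρ * Fintype.card ι) := by
        rw [ENNReal.ofReal_rpow_of_nonneg hδ hρ, ENNReal.ofReal_mul (by positivity)]
        simp [mul_comm]

section Packing

variable {E : Type*} [NormedAddCommGroup E] [NormedSpace ℝ E] [FiniteDimensional ℝ E]

theorem tsum_ofReal_pow_finrank_mul_le [MeasurableSpace E] [BorelSpace E] (μ : Measure E)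
    [μ.IsAddHaarMeasure] {ι : Type*} {x : ι → E} {r : ι → ℝ} {u : Set ι} {S : Set E}
    (hu : u.Countable) (hdisj : u.PairwiseDisjoint fun j => closedBall (x j) (r j))
    (hx : ∀ j ∈ u, x j ∈ S) (hr : ∀ j ∈ u, r j ∈ Icc 0 1) :
    (∑' j : u, ENNReal.ofReal (r j ^ finrank ℝ E)) * μ (ball 0 1) ≤ μ (cthickening 1 S) := by
  rw [← ENNReal.tsum_mul_right]
  calc ∑' j : u, ENNReal.ofReal (r j ^ finrank ℝ E) * μ (ball 0 1)
      = μ (⋃ j ∈ u, closedBall (x j) (r j)) := by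
        rw [measure_biUnion hu hdisj fun _ _ => measurableSet_closedBall]
        exact tsum_congr fun j => (μ.addHaar_closedBall _ (hr j j.2).1).symm
    _ ≤ μ (cthickening 1 S) := measure_mono <| iUnion₂_subset fun j hj =>
        (closedBall_subset_closedBall (hr j hj).2).trans (closedBall_subset_cthickening (hx j hj) 1)

theorem exists_countable_ball_cover_tsum_pow_finrank_le {S : Set E} (hS : Bornology.IsBounded S) :
    ∃ C : ℝ≥0∞, C ≠ ∞ ∧ ∀ {ι : Type*} (x : ι → E) (r : ι → ℝ),
      (∀ i, x i ∈ S) → (∀ i, r i ∈ Ioc 0 1) →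
      ∃ u : Set ι, u.Countable ∧ (∀ i, ∃ j ∈ u, x i ∈ ball (x j) (r j)) ∧
        ∑' j : u, ENNReal.ofReal (r j ^ finrank ℝ E) ≤ C := by
  borelize E
  let μ : Measure E := Measure.addHaar
  have hball : μ (ball 0 1) ≠ 0 := (measure_ball_pos μ 0 one_pos).ne'
  refine ⟨ENNReal.ofReal (5 ^ finrank ℝ E) * (μ (cthickening 1 S) / μ (ball 0 1)), ?_,
    fun x r hx hr => ?_⟩
  · exact ENNReal.mul_ne_top ENNReal.ofReal_ne_top
      (ENNReal.div_ne_top hS.cthickening.measure_lt_top.ne hball)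
  have hr5 : ∀ i, 0 < r i / 5 := fun i => by linarith [(hr i).1]
  obtain ⟨u, -, hdisj, hcover⟩ := Vitali.exists_disjoint_subfamily_covering_enlargement_closedBall
    univ x (fun i => r i / 5) 1 (fun i _ => by linarith [(hr i).2]) 4 (by norm_num)
  have hu : u.Countable := hdisj.countable_of_nonempty_interior fun j _ =>
    (nonempty_ball.2 (hr5 j)).mono ball_subset_interior_closedBall
  refine ⟨u, hu, fun i => ?_, ?_⟩
  · obtain ⟨j, hj, hsub⟩ := hcover i (mem_univ i)
    exact ⟨j, hj, closedBall_subset_ball (by linarith [hr5 j]) (hsub (mem_closedBall_self (hr5 i).le))⟩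
  have hpack := tsum_ofReal_pow_finrank_mul_le μ hu hdisj (fun j _ => hx j)
    fun j _ => ⟨(hr5 j).le, by linarith [(hr j).2]⟩
  rw [← ENNReal.le_div_iff_mul_le (.inl hball) (.inl measure_ball_lt_top.ne)] at hpack
  calc ∑' j : u, ENNReal.ofReal (r j ^ finrank ℝ E)
      = ENNReal.ofReal (5 ^ finrank ℝ E) * ∑' j : u, ENNReal.ofReal ((r j / 5) ^ finrank ℝ E) := by
        rw [← ENNReal.tsum_mul_left]
        refine tsum_congr fun j => ?_
        rw [← ENNReal.ofReal_mul (by positivity), ← mul_pow, mul_div_cancel₀ _ (by norm_num)]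
    _ ≤ _ := by gcongr

end Packing

section LocalCovers

variable {E : Type*} [NormedAddCommGroup E] [NormedSpace ℝ E]

def HasEfficientLocalCovers (ρ : ℝ) (Y : Set E) : Prop :=
  ∀ y ∈ Y, ∀ η : ℝ, 0 < η →
    ∃ r : ℝ, r ∈ Ioo (0 : ℝ) 1 ∧ ∃ δ : ℝ, δ ∈ Ioo (0 : ℝ) η ∧ ∃ N : ℕ,
      δ ^ ρ * N ≤ r ^ finrank ℝ E ∧
      ∃ U : Fin N → Set E, (ball y r ∩ Y ⊆ ⋃ i, U i) ∧ ∀ i, ediam (U i) ≤ ENNReal.ofReal δ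

theorem HasEfficientLocalCovers.mono {ρ : ℝ} {Y Z : Set E} (hY : HasEfficientLocalCovers ρ Y)
    (hZY : Z ⊆ Y) : HasEfficientLocalCovers ρ Z := fun y hy η hη => by
  obtain ⟨r, hr, δ, hδ, N, hN, U, hU, hdiam⟩ := hY y (hZY hy) η hη
  exact ⟨r, hr, δ, hδ, N, hN, U, (inter_subset_inter_right _ hZY).trans hU, hdiam⟩

variable [FiniteDimensional ℝ E]

theorem HasEfficientLocalCovers.hausdorffMeasure_ne_top [MeasurableSpace E] [BorelSpace E]
    {ρ : ℝ} {S : Set E} (hS : HasEfficientLocalCovers ρ S) (hρ : 0 ≤ ρ)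
    (hSb : Bornology.IsBounded S) : μH[ρ] S ≠ ∞ := by
  obtain ⟨C, hC, hpack⟩ := exists_countable_ball_cover_tsum_pow_finrank_le hSb
  refine ne_top_of_le_ne_top hC (hausdorffMeasure_le_of_forall_cover fun η hη => ?_)
  choose r hr δ hδ N hN U hU hdiam using fun y : S => hS y y.2 η hη
  obtain ⟨u, hu, hcover, hsum⟩ :=
    hpack Subtype.val r (fun y => y.2) fun y => Ioo_subset_Ioc_self (hr y)
  have := hu.to_subtype
  refine ⟨Σ j : u, Fin (N j), inferInstance, fun p => U p.1 p.2, fun y hy => ?_,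
    fun p => (hdiam p.1 p.2).trans (ENNReal.ofReal_le_ofReal (hδ p.1).2.le), ?_⟩
  · obtain ⟨j, hj, hyj⟩ := hcover ⟨y, hy⟩
    obtain ⟨i, hi⟩ := mem_iUnion.1 (hU j ⟨hyj, hy⟩)
    exact mem_iUnion.2 ⟨⟨⟨j, hj⟩, i⟩, hi⟩
  calc ∑' p : Σ j : u, Fin (N j), ediam (U p.1 p.2) ^ ρ
      = ∑' j : u, ∑ i, ediam (U j i) ^ ρ := by
        simp only [ENNReal.tsum_sigma', tsum_fintype]
    _ ≤ ∑' j : u, ENNReal.ofReal (r j ^ finrank ℝ E) := ENNReal.tsum_le_tsum fun j =>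
        (sum_ediam_rpow_le (hδ j).1.le hρ (hdiam j)).trans
          (ENNReal.ofReal_le_ofReal (by simpa using hN j))
    _ ≤ C := hsum

theorem HasEfficientLocalCovers.dimH_le {ρ : ℝ} {Y : Set E} (hY : HasEfficientLocalCovers ρ Y)
    (hρ : 0 ≤ ρ) : dimH Y ≤ ENNReal.ofReal ρ := by
  borelize E
  have hpiece : ∀ n : ℕ, dimH (Y ∩ closedBall 0 n) ≤ ENNReal.ofReal ρ := fun n => by
    refine dimH_le_of_hausdorffMeasure_ne_top ?_
    rw [Real.coe_toNNReal ρ hρ]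
    exact (hY.mono inter_subset_left).hausdorffMeasure_ne_top hρ
      (isBounded_closedBall.subset inter_subset_right)
  calc dimH Y = dimH (⋃ n : ℕ, Y ∩ closedBall 0 n) := by
        rw [← inter_iUnion, iUnion_closedBall_nat, inter_univ]
    _ = ⨆ n : ℕ, dimH (Y ∩ closedBall 0 n) := dimH_iUnion _
    _ ≤ ENNReal.ofReal ρ := iSup_le hpiece

end LocalCovers

theorem dimH_le_of_covering {d : ℕ} (Y : Set (EuclideanSpace ℝ (Fin d))) (ρ : ℝ) (hρ : 1 < ρ)
    (H : ∀ y ∈ Y, ∀ η : ℝ, 0 < η →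
      ∃ r : ℝ, r ∈ Set.Ioo (0 : ℝ) 1 ∧ ∃ δ : ℝ, δ ∈ Set.Ioo (0 : ℝ) η ∧ ∃ N : ℕ,
        δ ^ ρ * N ≤ r ^ d ∧
        ∃ U : Fin N → Set (EuclideanSpace ℝ (Fin d)),
          (ball y r ∩ Y ⊆ ⋃ i, U i) ∧ ∀ i, EMetric.diam (U i) ≤ ENNReal.ofReal δ) :
    dimH Y ≤ ENNReal.ofReal ρ := by
  have hY : HasEfficientLocalCovers ρ Y := by
    rwa [HasEfficientLocalCovers, finrank_euclideanSpace_fin]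
  exact hY.dimH_le (by linarith)
end
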